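/- Let K be a field, S = K[x,y], b ≥ 1 an integer, I = (x^{2b+1}, x^2 y^{2b-1}, y^{2b+1}) ⊆ S, and let k ≥ b be an integer. Set w = x^{2b} y^{(2b+1)(k-1)}. Then w ∉ I^k, x·w ∈ I^k, y·w ∈ I^k, and hence the colon ideal I^k : (w) equals the maximal ideal (x,y). In particular v(I^k) ≤ (2b+1)k - 1 for all k ≥ b. -/

import Mathlib

open MvPolynomial

/-- An ideal of a polynomial ring is *graded* (homogeneous) if it is generated by
homogeneous polynomials. -/
def IsGradedIdeal {n : ℕ} {K : Type*} [Field K]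
    (I : Ideal (MvPolynomial (Fin n) K)) : Prop :=
  ∃ G : Set (MvPolynomial (Fin n) K),
    (∀ g ∈ G, ∃ d, g.IsHomogeneous d) ∧ I = Ideal.span G

/-- `vp I p` is the `v_p`-number of `I`: the least degree of a homogeneous
polynomial `f` with `I : f = p`. -/
noncomputable def vp {n : ℕ} {K : Type*} [Field K]
    (I p : Ideal (MvPolynomial (Fin n) K)) : ℕ :=
  sInf {d | ∃ f : MvPolynomial (Fin n) K, f.IsHomogeneous d ∧
    Submodule.colon I (Ideal.span {f}) = p}

/-- `vnum I` is the `v`-number of `I`: the minimum of `vp I p` over the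
associated primes `p` of `S/I`. -/
noncomputable def vnum {n : ℕ} {K : Type*} [Field K]
    (I : Ideal (MvPolynomial (Fin n) K)) : ℕ :=
  sInf {d | ∃ p ∈ associatedPrimes (MvPolynomial (Fin n) K) (MvPolynomial (Fin n) K ⧸ I),
    ∃ f : MvPolynomial (Fin n) K, f.IsHomogeneous d ∧
      Submodule.colon I (Ideal.span {f}) = p}

/-- `astab I` is the index of ass-stability of `I`: the least `k₀ ≥ 1` such that
`Ass(I^k) = Ass(I^{k₀})` for all `k ≥ k₀`. -/
noncomputable def astab {n : ℕ} {K : Type*} [Field K]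
    (I : Ideal (MvPolynomial (Fin n) K)) : ℕ :=
  sInf {k₀ | 1 ≤ k₀ ∧ ∀ k, k₀ ≤ k →
    associatedPrimes (MvPolynomial (Fin n) K) (MvPolynomial (Fin n) K ⧸ I ^ k)
      = associatedPrimes (MvPolynomial (Fin n) K) (MvPolynomial (Fin n) K ⧸ I ^ k₀)}

/-- `alphaDeg I` is the initial degree `α(I) = min {d : I_d ≠ 0}` of `I`. -/
noncomputable def alphaDeg {n : ℕ} {K : Type*} [Field K]
    (I : Ideal (MvPolynomial (Fin n) K)) : ℕ :=
  sInf {d | ∃ f ∈ I, f ≠ 0 ∧ f.IsHomogeneous d}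

/-- `vstab I` is the index of v-stability of `I`: the least `k₀ ≥ 1` such that
`v(I^k) = α(I)·k + c` for all `k ≥ k₀`, where `c` is the constant such that this
holds for all `k ≫ 0`. -/
noncomputable def vstab {n : ℕ} {K : Type*} [Field K]
    (I : Ideal (MvPolynomial (Fin n) K)) : ℕ :=
  sInf {k₀ | 1 ≤ k₀ ∧ ∃ c : ℤ, ∀ k, k₀ ≤ k →
    (vnum (I ^ k) : ℤ) = (alphaDeg I : ℤ) * k + c}

/-- `assInf I` is the stable set of associated primes `Ass^∞(I)` of the powers of `I`. -/
def assInf {n : ℕ} {K : Type*} [Field K]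
    (I : Ideal (MvPolynomial (Fin n) K)) : Set (Ideal (MvPolynomial (Fin n) K)) :=
  {p | ∃ k₀, ∀ k, k₀ ≤ k →
    p ∈ associatedPrimes (MvPolynomial (Fin n) K) (MvPolynomial (Fin n) K ⧸ I ^ k)}

/-- `astabP I p` is the least `k₀` such that `p ∈ Ass(I^k)` for all `k ≥ k₀`. -/
noncomputable def astabP {n : ℕ} {K : Type*} [Field K]
    (I p : Ideal (MvPolynomial (Fin n) K)) : ℕ :=
  sInf {k₀ | ∀ k, k₀ ≤ k →
    p ∈ associatedPrimes (MvPolynomial (Fin n) K) (MvPolynomial (Fin n) K ⧸ I ^ k)}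

/-- `vstabP I p` is the least `k₀` such that `p ∈ Ass(I^k)` and `v_p(I^k)` agrees
with its eventual linear function `a_p·k + b_p` for all `k ≥ k₀`. -/
noncomputable def vstabP {n : ℕ} {K : Type*} [Field K]
    (I p : Ideal (MvPolynomial (Fin n) K)) : ℕ :=
  sInf {k₀ | ∃ a b : ℤ, ∀ k, k₀ ≤ k →
    p ∈ associatedPrimes (MvPolynomial (Fin n) K) (MvPolynomial (Fin n) K ⧸ I ^ k) ∧
    (vp (I ^ k) p : ℤ) = a * k + b}

section Helpers

variable {K : Type*} [Field K]

/-- The monomial ideal of polynomials supported in total degrees ≥ a. -/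
noncomputable def degIdeal (K : Type*) [Field K] (a : ℕ) : Ideal (MvPolynomial (Fin 2) K) :=
  Ideal.span ((fun s => monomial s (1 : K)) '' {m | a ≤ m 0 + m 1})

lemma mem_degIdeal_of_monomial (a : ℕ) (m : Fin 2 →₀ ℕ) (h : a ≤ m 0 + m 1) (c : K) :
    monomial m c ∈ degIdeal K a := by
  have : monomial m c = C c * monomial m 1 := by rw [C_mul_monomial, mul_one]
  rw [this]
  exact Ideal.mul_mem_left _ _ (Ideal.subset_span ⟨m, h, rfl⟩)

lemma degIdeal_mul (a c : ℕ) : degIdeal K a * degIdeal K c ≤ degIdeal K (a + c) := by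
  rw [degIdeal, degIdeal, Ideal.span_mul_span, Ideal.span_le]
  rintro x hx
  simp only [Set.mem_mul, Set.mem_iUnion, Set.mem_image, Set.mem_setOf_eq, Set.mem_singleton_iff] at hx
  obtain ⟨u, ⟨mu, hmu, rfl⟩, v, ⟨mv, hmv, rfl⟩, rfl⟩ := hx
  simp only [monomial_mul, one_mul]
  apply mem_degIdeal_of_monomial
  simp only [Finsupp.add_apply]
  omega

lemma pow_le_degIdeal (I : Ideal (MvPolynomial (Fin 2) K)) (a : ℕ) (hIa : I ≤ degIdeal K a)
    (n : ℕ) : I ^ n ≤ degIdeal K (a * n) := by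
  induction n with
  | zero =>
    have htop : degIdeal K 0 = ⊤ := by
      rw [Ideal.eq_top_iff_one]
      simpa using mem_degIdeal_of_monomial 0 0 (by simp) (1 : K)
    simp only [pow_zero, mul_zero, htop, Ideal.one_eq_top, le_refl]
  | succ n ih =>
    calc I ^ (n+1) = I ^ n * I := pow_succ I n
    _ ≤ degIdeal K (a * n) * degIdeal K a := Ideal.mul_mono ih hIa
    _ ≤ degIdeal K (a * n + a) := degIdeal_mul _ _
    _ = degIdeal K (a * (n+1)) := by ring_nf

lemma monomial_not_mem_degIdeal (a e N : ℕ) (h : a + e < N) :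
    (monomial (Finsupp.single (0 : Fin 2) a + Finsupp.single 1 e) (1:K)) ∉ degIdeal K N := by
  intro hmem
  rw [degIdeal, mem_ideal_span_monomial_image] at hmem
  have hd : (Finsupp.single (0 : Fin 2) a + Finsupp.single 1 e) ∈
      (monomial (Finsupp.single (0 : Fin 2) a + Finsupp.single 1 e) (1:K)).support := by
    rw [mem_support_iff, coeff_monomial, if_pos rfl]
    exact one_ne_zero
  obtain ⟨si, hsi, hle⟩ := hmem _ hd
  have h0 := hle 0
  have h1 := hle 1
  simp [Finsupp.single_apply] at h0 h1
  simp only [Set.mem_setOf_eq] at hsi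
  omega

lemma span_X_eq_ker :
    Ideal.span {(X 0 : MvPolynomial (Fin 2) K), X 1}
      = RingHom.ker (constantCoeff : MvPolynomial (Fin 2) K →+* K) := by
  apply le_antisymm
  · rw [Ideal.span_le]
    rintro p (rfl | rfl) <;> simp [RingHom.mem_ker]
  · intro p hp
    rw [RingHom.mem_ker] at hp
    have himg : ({(X 0 : MvPolynomial (Fin 2) K), X 1} : Set _) = X '' Set.univ := by
      ext q
      simp only [Set.image_univ, Set.mem_range, Set.mem_insert_iff, Set.mem_singleton_iff]
      constructor
      · rintro (rfl | rfl) <;> [exact ⟨0, rfl⟩; exact ⟨1, rfl⟩]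
      · rintro ⟨i, rfl⟩; fin_cases i <;> simp
    rw [himg, mem_ideal_span_X_image]
    intro m hm
    by_contra hc
    push_neg at hc
    have hm0 : m = 0 := by
      ext i
      simpa using hc i (Set.mem_univ i)
    rw [mem_support_iff, hm0] at hm
    exact hm hp

end Helpers

/-- For `S = K[x,y]`, `b ≥ 1`, `k ≥ b`,
`I = (x^{2b+1}, x^2 y^{2b-1}, y^{2b+1})` and `w = x^{2b} y^{(2b+1)(k-1)}`, one has
`w ∉ I^k`, `xw ∈ I^k`, `yw ∈ I^k`, hence `I^k : (w) = (x,y)`; in particular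
`v(I^k) ≤ (2b+1)k - 1`. -/
theorem colon_w_eq_max (K : Type*) [Field K] (b k : ℕ) (hb : 1 ≤ b) (hk : b ≤ k)
    (I : Ideal (MvPolynomial (Fin 2) K))
    (hI : I = Ideal.span {X 0 ^ (2*b+1), X 0 ^ 2 * X 1 ^ (2*b-1), X 1 ^ (2*b+1)})
    (w : MvPolynomial (Fin 2) K)
    (hw : w = X 0 ^ (2*b) * X 1 ^ ((2*b+1)*(k-1))) :
    w ∉ I ^ k ∧ X 0 * w ∈ I ^ k ∧ X 1 * w ∈ I ^ k ∧
    Submodule.colon (I ^ k) (Ideal.span {w}) = Ideal.span {X 0, X 1} ∧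
    vnum (I ^ k) ≤ (2*b+1) * k - 1 := by
  obtain ⟨t, rfl⟩ : ∃ t, k = b + t := ⟨k - b, by omega⟩
  obtain ⟨s, rfl⟩ : ∃ s, b = s + 1 := ⟨b - 1, by omega⟩
  have h2b1 : 2*(s+1) - 1 = 2*s+1 := by omega
  have hk1 : s + 1 + t - 1 = s + t := by omega
  rw [h2b1] at hI
  rw [hk1] at hw
  -- generator memberships
  have hg1 : (X 0 ^ (2*(s+1)+1) : MvPolynomial (Fin 2) K) ∈ I := by
    rw [hI]; exact Ideal.subset_span (by simp)
  have hg2 : (X 0 ^ 2 * X 1 ^ (2*s+1) : MvPolynomial (Fin 2) K) ∈ I := by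
    rw [hI]; exact Ideal.subset_span (by simp)
  have hg3 : (X 1 ^ (2*(s+1)+1) : MvPolynomial (Fin 2) K) ∈ I := by
    rw [hI]; exact Ideal.subset_span (by simp)
  -- x*w ∈ I^k
  have hxw : X 0 * w ∈ I ^ (s + 1 + t) := by
    have heq : X 0 * w = X 0 ^ (2*(s+1)+1) * (X 1 ^ (2*(s+1)+1)) ^ (s + t) := by
      rw [hw, ← pow_mul]; ring
    rw [heq, show s + 1 + t = 1 + (s + t) from by omega, pow_add, pow_one]
    exact Ideal.mul_mem_mul hg1 (Ideal.pow_mem_pow hg3 _)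
  -- y*w ∈ I^k
  have hyw : X 1 * w ∈ I ^ (s + 1 + t) := by
    have heq : X 1 * w = (X 0 ^ 2 * X 1 ^ (2*s+1)) ^ (s+1) * (X 1 ^ (2*(s+1)+1)) ^ t := by
      rw [hw]; ring
    rw [heq, show s + 1 + t = (s + 1) + t from rfl, pow_add]
    exact Ideal.mul_mem_mul (Ideal.pow_mem_pow hg2 _) (Ideal.pow_mem_pow hg3 _)
  -- w ∉ I^k
  have hwpow : I ^ (s+1+t) ≤ degIdeal K ((2*(s+1)+1) * (s+1+t)) := by
    apply pow_le_degIdeal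
    rw [hI, Ideal.span_le]
    rintro p hp
    simp only [Set.mem_insert_iff, Set.mem_singleton_iff] at hp
    rcases hp with rfl | rfl | rfl
    · rw [X_pow_eq_monomial]
      exact SetLike.mem_coe.mpr (mem_degIdeal_of_monomial _ _ (by simp [Finsupp.single_apply]) _)
    · rw [X_pow_eq_monomial, X_pow_eq_monomial, monomial_mul, one_mul]
      exact SetLike.mem_coe.mpr (mem_degIdeal_of_monomial _ _
        (by simp [Finsupp.add_apply, Finsupp.single_apply]; omega) _)
    · rw [X_pow_eq_monomial]
      exact SetLike.mem_coe.mpr (mem_degIdeal_of_monomial _ _ (by simp [Finsupp.single_apply]) _)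
  have hwmon : w = monomial (Finsupp.single (0 : Fin 2) (2*(s+1))
      + Finsupp.single 1 ((2*(s+1)+1)*(s+t))) (1 : K) := by
    rw [hw, X_pow_eq_monomial, X_pow_eq_monomial, monomial_mul, one_mul]
  have hlt : 2*(s+1) + (2*(s+1)+1)*(s+t) < (2*(s+1)+1) * (s+1+t) := by
    have : (2*(s+1)+1) * (s+1+t) = 2*(s+1) + (2*(s+1)+1)*(s+t) + 1 := by ring
    linarith
  have hwnot : w ∉ I ^ (s+1+t) := by
    intro hmem
    exact monomial_not_mem_degIdeal _ _ _ hlt (hwmon ▸ hwpow hmem)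
  -- colon ideal
  have hge : Ideal.span {(X 0 : MvPolynomial (Fin 2) K), X 1}
      ≤ Submodule.colon (I ^ (s+1+t)) (Ideal.span {w}) := by
    rw [Ideal.span_le]
    rintro p hp
    simp only [Set.mem_insert_iff, Set.mem_singleton_iff] at hp
    rw [SetLike.mem_coe, ← Ideal.submodule_span_eq, Submodule.mem_colon_span_singleton, smul_eq_mul]
    rcases hp with rfl | rfl
    · exact hxw
    · exact hyw
  have hcolon : Submodule.colon (I ^ (s+1+t)) (Ideal.span {w}) = Ideal.span {X 0, X 1} := by
    apply le_antisymm
    · intro g hg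
      rw [← Ideal.submodule_span_eq, Submodule.mem_colon_span_singleton, smul_eq_mul] at hg
      set c := constantCoeff g with hc
      have hcc : c = 0 := by
        by_contra hcne
        have hg' : g - C c ∈ Ideal.span {(X 0 : MvPolynomial (Fin 2) K), X 1} := by
          rw [span_X_eq_ker, RingHom.mem_ker]
          simp [hc]
        have hg'w : (g - C c) * w ∈ I ^ (s+1+t) := by
          have := hge hg'
          rw [← Ideal.submodule_span_eq, Submodule.mem_colon_span_singleton, smul_eq_mul] at this
          exact this
        have hCcw : C c * w ∈ I ^ (s+1+t) := by
          have : C c * w = g * w - (g - C c) * w := by ring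
          rw [this]
          exact sub_mem hg hg'w
        have : w ∈ I ^ (s+1+t) := by
          have hww : w = C c⁻¹ * (C c * w) := by
            rw [← mul_assoc, ← C_mul, inv_mul_cancel₀ hcne, C_1, one_mul]
          rw [hww]
          exact Ideal.mul_mem_left _ _ hCcw
        exact hwnot this
      rw [span_X_eq_ker, RingHom.mem_ker]
      exact hcc
    · exact hge
  refine ⟨hwnot, hxw, hyw, hcolon, ?_⟩
  -- the v-number bound
  have hprime : (Ideal.span {(X 0 : MvPolynomial (Fin 2) K), X 1}).IsPrime := by
    rw [span_X_eq_ker]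
    exact RingHom.ker_isPrime _
  have hassoc : Ideal.span {(X 0 : MvPolynomial (Fin 2) K), X 1} ∈
      associatedPrimes (MvPolynomial (Fin 2) K)
        (MvPolynomial (Fin 2) K ⧸ I ^ (s+1+t)) := by
    refine (isAssociatedPrime_iff).2 ⟨hprime, Ideal.Quotient.mk (I ^ (s+1+t)) w, ?_⟩
    ext r
    rw [Submodule.mem_colon_singleton]
    have hsmul : r • (Ideal.Quotient.mk (I ^ (s+1+t)) w)
        = Ideal.Quotient.mk (I ^ (s+1+t)) (r * w) := rfl
    rw [hsmul, Submodule.mem_bot, Ideal.Quotient.eq_zero_iff_mem]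
    rw [← hcolon, ← Ideal.submodule_span_eq, Submodule.mem_colon_span_singleton, smul_eq_mul]
  have hdeg : w.IsHomogeneous ((2*(s+1)+1) * (s+1+t) - 1) := by
    have h1 : w.IsHomogeneous (1 * (2*(s+1)) + 1 * ((2*(s+1)+1)*(s+t))) := by
      rw [hw]
      exact ((isHomogeneous_X K 0).pow _).mul ((isHomogeneous_X K 1).pow _)
    have heq : 1 * (2*(s+1)) + 1 * ((2*(s+1)+1)*(s+t)) = (2*(s+1)+1) * (s+1+t) - 1 := by
      have : (2*(s+1)+1) * (s+1+t) = 2*(s+1) + (2*(s+1)+1)*(s+t) + 1 := by ring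
      rw [this]
      ring_nf
      omega
    rwa [heq] at h1
  apply Nat.sInf_le
  exact ⟨Ideal.span {(X 0 : MvPolynomial (Fin 2) K), X 1}, hassoc, w, hdeg, hcolon⟩
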